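/- arXiv:2005.05620 — 4 statements merged into one kernel-verified Lean document; each statement's English description precedes it below -/
import Mathlib

section
/- For an integer n ≥ 2, the greatest common divisor of the binomial coefficients C(n, a) for 0 < a < n equals p if n is a power p^k of a prime p (with k ≥ 1), and equals 1 otherwise. -/
open Finset

lemma Nat.Ioo_zero_eq_Icc_one_sub_one (n : ℕ) : Ioo 0 n = Icc 1 (n - 1) := by
  ext a
  simp only [mem_Ioo, mem_Icc]
  omega

lemma Nat.isPrimePow_iff_exists_prime_pow (n : ℕ) :
    IsPrimePow n ↔ ∃ p k : ℕ, p.Prime ∧ 1 ≤ k ∧ n = p ^ k := by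
  simp only [isPrimePow_nat_iff, Nat.one_le_iff_ne_zero, pos_iff_ne_zero, eq_comm (a := n)]

/-- For `n ≥ 2`, the gcd of the binomial coefficients `C(n, a)` for `0 < a < n`
equals `p` if `n = p ^ k` for a prime `p` and `k ≥ 1`, and equals `1` otherwise. -/
theorem stmt0 (n : ℕ) (hn : 2 ≤ n) :
    (∀ p k : ℕ, p.Prime → 1 ≤ k → n = p ^ k →
      (Finset.Ioo 0 n).gcd (fun a => n.choose a) = p) ∧
    ((¬ ∃ p k : ℕ, p.Prime ∧ 1 ≤ k ∧ n = p ^ k) →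
      (Finset.Ioo 0 n).gcd (fun a => n.choose a) = 1) := by
  rw [Nat.Ioo_zero_eq_Icc_one_sub_one, ← Nat.isPrimePow_iff_exists_prime_pow]
  refine ⟨fun p k hp hk hn_eq => ?_, Choose.gcd_choose_eq_one_of_not_isPrimePow hn⟩
  have hpow : IsPrimePow n := (Nat.isPrimePow_iff_exists_prime_pow n).2 ⟨p, k, hp, hk, hn_eq⟩
  rw [Choose.gcd_choose_eq_minFac_of_isPrimePow hpow, hn_eq,
    Nat.Prime.pow_minFac hp (by omega)]
end

section
/- Let R be a commutative semi-local ring all of whose residue fields are infinite. Then R has many units: for every n there exist a_1, ..., a_n in R such that every nonempty partial sum of the a_i is a unit of R. -/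
/-!
Over each residue field `R ⧸ m`, which is infinite, choose `b₁, …, bₙ` one at a time so that no
nonempty partial sum vanishes. The maximal ideals are pairwise coprime, so by the Chinese remainder
theorem there are `aᵢ ∈ R` reducing to `bᵢ` modulo every `m`. Each nonempty partial sum of the `aᵢ`
then lies in no maximal ideal, hence is a unit.
-/

theorem Finset.exists_sum_ne_zero_of_infinite {ι K : Type*} [AddCommGroup K] [Infinite K]
    (s : Finset ι) : ∃ b : ι → K, ∀ J ⊆ s, J.Nonempty → ∑ i ∈ J, b i ≠ 0 := by
  classical
  induction s using Finset.induction_on with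
  | empty => exact ⟨0, fun J hJ hne => absurd (Finset.subset_empty.1 hJ) hne.ne_empty⟩
  | insert a s ha ih =>
    obtain ⟨b, hb⟩ := ih
    obtain ⟨c, hc⟩ := Infinite.exists_notMem_finset (s.powerset.image fun J => -∑ i ∈ J, b i)
    refine ⟨Function.update b a c, fun J hJ hne => ?_⟩
    have hsum : ∀ J' ⊆ s, ∑ i ∈ J', Function.update b a c i = ∑ i ∈ J', b i :=
      fun J' hJ' => Finset.sum_congr rfl fun i hi =>
        Function.update_of_ne (ne_of_mem_of_not_mem (hJ' hi) ha) _ _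
    by_cases haJ : a ∈ J
    · have hJs : J.erase a ⊆ s := Finset.subset_insert_iff.1 hJ
      rw [← Finset.add_sum_erase J _ haJ, Function.update_self, hsum _ hJs]
      exact fun h0 => hc (Finset.mem_image.2
        ⟨J.erase a, Finset.mem_powerset.2 hJs, neg_eq_of_add_eq_zero_left h0⟩)
    · have hJs : J ⊆ s := (Finset.subset_insert_iff_of_notMem haJ).1 hJ
      rw [hsum J hJs]
      exact hb J hJs hne

theorem isUnit_of_forall_notMem_maximalSpectrum {R : Type*} [CommSemiring R] {x : R}
    (hx : ∀ m : MaximalSpectrum R, x ∉ m.asIdeal) : IsUnit x := by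
  by_contra hu
  obtain ⟨I, hI, hxI⟩ := exists_max_ideal_of_mem_nonunits hu
  exact hx ⟨I, hI⟩ hxI

theorem exists_forall_isUnit_sum_of_infinite_residueField {R : Type*} [CommRing R]
    [Finite (MaximalSpectrum R)] [∀ m : MaximalSpectrum R, Infinite (R ⧸ m.asIdeal)]
    (ι : Type*) [Fintype ι] :
    ∃ a : ι → R, ∀ J : Finset ι, J.Nonempty → IsUnit (∑ i ∈ J, a i) := by
  choose b hb using fun m : MaximalSpectrum R =>
    (Finset.univ : Finset ι).exists_sum_ne_zero_of_infinite (K := R ⧸ m.asIdeal)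
  choose a ha using fun i => Ideal.pi_quotient_surjective
    (fun _ _ h => MaximalSpectrum.isCoprime_of_ne h) fun m => b m i
  refine ⟨a, fun J hJ => isUnit_of_forall_notMem_maximalSpectrum fun m hm => ?_⟩
  refine hb m J J.subset_univ hJ ?_
  rw [← Ideal.Quotient.eq_zero_iff_mem, map_sum] at hm
  simpa [ha] using hm

/-- A commutative semi-local ring all of whose residue fields are infinite has many
units: for every `n` there exist `a 0, ..., a (n-1)` all of whose nonempty partial
sums are units. -/
theorem stmt4 (R : Type*) [CommRing R] (h : {I : Ideal R | I.IsMaximal}.Finite)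
    (hres : ∀ I : Ideal R, I.IsMaximal → Infinite (R ⧸ I)) (n : ℕ) :
    ∃ a : Fin n → R, ∀ J : Finset (Fin n), J.Nonempty → IsUnit (∑ i ∈ J, a i) := by
  have : Finite (MaximalSpectrum R) := (MaximalSpectrum.equivSubtype R).finite_iff.2 h.to_subtype
  have := fun m : MaximalSpectrum R => hres m.asIdeal m.isMaximal
  exact exists_forall_isUnit_sum_of_infinite_residueField (Fin n)
end

section
/- Let R be a commutative ring with no nontrivial idempotents (i.e., Spec R connected). If a ∈ R is an element such that R/(a) is a projective R-module, then a is either zero or a unit. -/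
/-!
A section `s` of `R → R ⧸ I` is determined by `c = s 1`: it sends `x mod I` to `x * c`.
Hence `c ≡ 1 mod I` and `c` kills `I`, so `e = 1 - c` is an idempotent generating `I`.
For `I = (a)` connectedness forces `e = 0` or `e = 1`, i.e. `a = 0` or `(a) = R`.
-/

namespace Ideal

variable {R : Type*} [CommRing R]

theorem exists_sub_mem_and_mul_eq_zero_of_projective (I : Ideal R)
    [Module.Projective R (R ⧸ I)] : ∃ c : R, 1 - c ∈ I ∧ ∀ x ∈ I, x * c = 0 := by
  obtain ⟨s, hs⟩ := Module.projective_lifting_property I.mkQ LinearMap.id I.mkQ_surjective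
  have hs_mk (x : R) : s (Quotient.mk I x) = x * s 1 := by
    rw [← smul_eq_mul, ← s.map_smul, Algebra.smul_def, mul_one]
    rfl
  refine ⟨s 1, ?_, fun x hx => ?_⟩
  · rw [← Quotient.eq_zero_iff_mem, map_sub, map_one, sub_eq_zero]
    exact (LinearMap.congr_fun hs 1).symm
  · rw [← hs_mk, Quotient.eq_zero_iff_mem.mpr hx, map_zero]

theorem exists_isIdempotentElem_eq_span_singleton_of_projective (I : Ideal R)
    [Module.Projective R (R ⧸ I)] : ∃ e : R, IsIdempotentElem e ∧ I = span {e} := by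
  obtain ⟨c, hc, hIc⟩ := I.exists_sub_mem_and_mul_eq_zero_of_projective
  have h_mul (x : R) (hx : x ∈ I) : x * (1 - c) = x := by
    rw [mul_sub, mul_one, hIc x hx, sub_zero]
  refine ⟨1 - c, h_mul _ hc, le_antisymm (fun x hx => ?_) ((span_singleton_le_iff_mem I).mpr hc)⟩
  rw [← h_mul x hx]
  exact mul_mem_left _ x (mem_span_singleton_self _)

end Ideal

/-- If a commutative ring `R` has no nontrivial idempotents and `R ⧸ (a)` is a
projective `R`-module, then `a` is zero or a unit. -/
theorem stmt5 (R : Type*) [CommRing R]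
    (hidem : ∀ e : R, IsIdempotentElem e → e = 0 ∨ e = 1)
    (a : R) (hproj : Module.Projective R (R ⧸ Ideal.span {a})) :
    a = 0 ∨ IsUnit a := by
  obtain ⟨e, he, hspan⟩ := (Ideal.span {a}).exists_isIdempotentElem_eq_span_singleton_of_projective
  rw [← Ideal.span_singleton_eq_bot, ← Ideal.span_singleton_eq_top, hspan]
  rcases hidem e he with rfl | rfl
  · exact Or.inl (Ideal.span_singleton_eq_bot.mpr rfl)
  · exact Or.inr Ideal.span_singleton_one
end

section
/- Let k be a commutative ring, G a group, and M a k[G]-module. Suppose the k-module of G-invariant k-bilinear forms on M is free of rank 1 with basis a form b whose adjoint M → Hom_k(M, k) is injective. Then the k-algebra of G-equivariant k-linear endomorphisms of M is isomorphic to k, via the map sending c ∈ k to c·id. In particular, if k has no nontrivial idempotents, M is indecomposable as a k[G]-module. -/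
/-!
An equivariant endomorphism `f` turns the invariant form `b` into the invariant form
`(x, y) ↦ b (f x) y`, which must then be `c • b` for a unique scalar `c`; injectivity of the
adjoint of `b` upgrades `b ∘ f = c • b` to `f = c • id`. An idempotent `f = c • id` forces
`c` to be idempotent, hence `0` or `1` when `k` is connected.
-/

namespace Representation

variable {k G M : Type*} [CommSemiring k] [Monoid G] [AddCommMonoid M] [Module k M]

def IsInvariantForm (ρ : Representation k G M) (B : M →ₗ[k] M →ₗ[k] k) : Prop :=
  ∀ (g : G) (x y : M), B (ρ g x) (ρ g y) = B x y

theorem IsInvariantForm.comp {ρ : Representation k G M} {b : M →ₗ[k] M →ₗ[k] k}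
    (hb : ρ.IsInvariantForm b) {f : M →ₗ[k] M} (hf : ∀ g : G, f ∘ₗ ρ g = ρ g ∘ₗ f) :
    ρ.IsInvariantForm (b ∘ₗ f) := by
  intro g x y
  rw [LinearMap.comp_apply, ← LinearMap.comp_apply f, hf g, LinearMap.comp_apply, hb]
  rfl

end Representation

theorem LinearMap.eq_smul_id_of_comp_eq_smul {k M : Type*} [CommSemiring k] [AddCommMonoid M]
    [Module k M] {b : M →ₗ[k] M →ₗ[k] k} (hb : Function.Injective fun x : M => b x)
    {f : M →ₗ[k] M} {c : k} (hc : b ∘ₗ f = c • b) : f = c • LinearMap.id := by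
  ext x
  apply hb
  simpa using LinearMap.congr_fun hc x

theorem Representation.existsUnique_eq_smul_id_of_commute {k G M : Type*} [CommSemiring k]
    [Monoid G] [AddCommMonoid M] [Module k M] {ρ : Representation k G M}
    {b : M →ₗ[k] M →ₗ[k] k} (hb : ρ.IsInvariantForm b)
    (hbadj : Function.Injective fun x : M => b x)
    (hbasis : ∀ B : M →ₗ[k] M →ₗ[k] k, ρ.IsInvariantForm B → ∃! c : k, B = c • b)
    {f : M →ₗ[k] M} (hf : ∀ g : G, f ∘ₗ ρ g = ρ g ∘ₗ f) :
    ∃! c : k, f = c • LinearMap.id := by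
  obtain ⟨c, hc, hunique⟩ := hbasis _ (hb.comp hf)
  refine ⟨c, LinearMap.eq_smul_id_of_comp_eq_smul hbadj hc, fun c' hc' => hunique c' ?_⟩
  rw [hc', LinearMap.comp_smul, LinearMap.comp_id]

theorem eq_zero_or_eq_one_of_existsUnique_eq_smul_one {k A : Type*} [CommSemiring k]
    [Semiring A] [Algebra k A] (hk : ∀ e : k, IsIdempotentElem e → e = 0 ∨ e = 1) {a : A}
    (ha : ∃! c : k, a = c • 1) (hidem : IsIdempotentElem a) : a = 0 ∨ a = 1 := by
  obtain ⟨c, rfl, hunique⟩ := ha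
  have hc : IsIdempotentElem c := hunique (c * c) (by rw [← hidem.eq, smul_mul_smul, mul_one])
  rcases hk c hc with rfl | rfl
  · exact Or.inl (zero_smul k 1)
  · exact Or.inr (one_smul k 1)

/-- If the `G`-invariant `k`-bilinear forms on a `k[G]`-module `M` form a free
`k`-module of rank 1 with basis a form `b` whose adjoint is injective, then every
`G`-equivariant `k`-linear endomorphism of `M` is a unique scalar multiple of the
identity; in particular, if `k` has no nontrivial idempotents, `M` is
indecomposable (every equivariant idempotent endomorphism is `0` or `id`). -/
theorem stmt11 (k G M : Type*) [CommRing k] [Group G] [AddCommGroup M] [Module k M]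
    (ρ : Representation k G M)
    (b : M →ₗ[k] M →ₗ[k] k)
    (hbinv : ∀ (g : G) (x y : M), b (ρ g x) (ρ g y) = b x y)
    (hbadj : Function.Injective fun x : M => b x)
    (hbasis : ∀ B : M →ₗ[k] M →ₗ[k] k,
      (∀ (g : G) (x y : M), B (ρ g x) (ρ g y) = B x y) → ∃! c : k, B = c • b) :
    (∀ f : M →ₗ[k] M, (∀ g : G, f ∘ₗ ρ g = ρ g ∘ₗ f) →
      ∃! c : k, f = c • (LinearMap.id : M →ₗ[k] M)) ∧
    ((∀ e : k, IsIdempotentElem e → e = 0 ∨ e = 1) →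
      ∀ f : M →ₗ[k] M, (∀ g : G, f ∘ₗ ρ g = ρ g ∘ₗ f) → f ∘ₗ f = f →
        f = 0 ∨ f = LinearMap.id) := by
  have hscalar : ∀ f : M →ₗ[k] M, (∀ g : G, f ∘ₗ ρ g = ρ g ∘ₗ f) →
      ∃! c : k, f = c • (LinearMap.id : M →ₗ[k] M) := fun f hf =>
    Representation.existsUnique_eq_smul_id_of_commute hbinv hbadj hbasis hf
  exact ⟨hscalar, fun hk f hf hidem =>
    eq_zero_or_eq_one_of_existsUnique_eq_smul_one (A := Module.End k M) hk (hscalar f hf) hidem⟩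
end
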